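/- arXiv:1210.5155 — 2 statements merged into one kernel-verified Lean document; each statement's English description precedes it below -/
import Mathlib

section
/- Let 𝔄 = [α₁,…,αₙ] be a polarized list of nonzero vectors spanning ℝʳ and let c be a chamber of 𝔄. Let W ∈ ℋ(𝔄) be a hyperplane, say W = ker f for a nonzero linear functional f on ℝʳ with f > 0 on c (such a sign choice exists since c is connected and disjoint from W), and suppose that w := (closure of c) ∩ W spans W. Let σ ⊆ {1,…,n} be such that (αⱼ)_{j∈σ} is a basis of ℝʳ and f(αⱼ) ≥ 0 for all j ∈ σ. Then w ⊆ Cone(αⱼ : j ∈ σ) if and only if c ⊆ Cone(αⱼ : j ∈ σ). -/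
open MvPolynomial

noncomputable section

/-- The standard inner product on `ℝʳ`. -/
def dotp {r : ℕ} (v w : Fin r → ℝ) : ℝ := ∑ i, v i * w i

/-- The linear polynomial `v₁x₁ + … + v_r x_r` associated to a vector `v ∈ ℝʳ`. -/
def linPoly {r : ℕ} (v : Fin r → ℝ) : MvPolynomial (Fin r) ℝ := ∑ i, C (v i) * X i

/-- The fraction field of `ℝ[x₁,…,x_r]`. -/
abbrev Frac (r : ℕ) := FractionRing (MvPolynomial (Fin r) ℝ)

/-- The canonical embedding of `ℝ[x₁,…,x_r]` into its fraction field. -/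
def emb {r : ℕ} (p : MvPolynomial (Fin r) ℝ) : Frac r := algebraMap _ _ p

/-- A real constant viewed inside the fraction field `Frac r`. -/
def cst {r : ℕ} (a : ℝ) : Frac r := emb (C a)

/-- `v` lies in the cone generated by the vectors `α i`, `i ∈ s`. -/
def InCone {r n : ℕ} (α : Fin n → Fin r → ℝ) (s : Finset (Fin n)) (v : Fin r → ℝ) : Prop :=
  ∃ c : Fin n → ℝ, (∀ i ∈ s, 0 ≤ c i) ∧ v = ∑ i ∈ s, c i • α i

/-- The cone generated by the vectors `α i`, `i ∈ s`, as a set. -/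
def coneSet {r n : ℕ} (α : Fin n → Fin r → ℝ) (s : Finset (Fin n)) : Set (Fin r → ℝ) :=
  {v | InCone α s v}

/-- The list `α` is polarized: some `ξ` pairs strictly positively with every `α i`. -/
def Polarized {r n : ℕ} (α : Fin n → Fin r → ℝ) : Prop :=
  ∃ ξ : Fin r → ℝ, ∀ i, 0 < dotp (α i) ξ

/-- `ε` is regular with respect to the list `α`: it lies in no proper subspace spanned by a
subset of the list. -/
def RegularWrt {r n : ℕ} (α : Fin n → Fin r → ℝ) (ε : Fin r → ℝ) : Prop :=
  ∀ s : Set (Fin n), Submodule.span ℝ (α '' s) ≠ ⊤ → ε ∉ Submodule.span ℝ (α '' s)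

/-- A set of indices is generating if the corresponding vectors span `ℝʳ`. -/
def Generating {r n : ℕ} (α : Fin n → Fin r → ℝ) (J : Set (Fin n)) : Prop :=
  Submodule.span ℝ (α '' J) = ⊤

/-- The fraction `P / ∏ᵢ αᵢ^{mᵢ}` in the fraction field. -/
def fracOf {r n : ℕ} (α : Fin n → Fin r → ℝ) (P : MvPolynomial (Fin r) ℝ) (m : Fin n → ℕ) :
    Frac r :=
  emb P / ∏ i, emb (linPoly (α i)) ^ m i

/-- `R_𝔄`: the span of all fractions `P / ∏ᵢ αᵢ^{mᵢ}`. -/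
def Rspace {r n : ℕ} (α : Fin n → Fin r → ℝ) : Submodule ℝ (Frac r) :=
  Submodule.span ℝ {x | ∃ P m, x = fracOf α P m}

/-- `G_𝔄`: the span of the fractions `1 / ∏ᵢ αᵢ^{mᵢ}` with generating support. -/
def Gspace {r n : ℕ} (α : Fin n → Fin r → ℝ) : Submodule ℝ (Frac r) :=
  Submodule.span ℝ {x | ∃ m : Fin n → ℕ, Generating α {i | 0 < m i} ∧ x = fracOf α 1 m}

/-- `NG_𝔄`: the span of the fractions `P / ∏ᵢ αᵢ^{mᵢ}` with non-generating support. -/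
def NGspace {r n : ℕ} (α : Fin n → Fin r → ℝ) : Submodule ℝ (Frac r) :=
  Submodule.span ℝ {x | ∃ P m, ¬ Generating α {i | 0 < m i} ∧ x = fracOf α P m}

/-- `Φ_σ = 1 / ∏_{j ∈ σ} αⱼ`. -/
def Phi {r n : ℕ} (α : Fin n → Fin r → ℝ) (σ : Finset (Fin n)) : Frac r :=
  (∏ j ∈ σ, emb (linPoly (α j)))⁻¹

/-- `(αⱼ)_{j ∈ σ}` is a basis of `ℝʳ`. -/
def IsConeBasis {r n : ℕ} (α : Fin n → Fin r → ℝ) (σ : Finset (Fin n)) : Prop :=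
  LinearIndependent ℝ (fun j : {x // x ∈ σ} => α j.1) ∧
    Submodule.span ℝ (α '' ↑σ) = ⊤

/-- The Gram determinant `det[⟨αⱼ, α_k⟩]_{j,k ∈ σ}`. -/
def gram {r n : ℕ} (α : Fin n → Fin r → ℝ) (σ : Finset (Fin n)) : ℝ :=
  Matrix.det (Matrix.of fun j k : {x // x ∈ σ} => dotp (α j.1) (α k.1))

/-- A Jeffrey–Kirwan functional for `(𝔄, ε)`. -/
def IsJKFunctional {r n : ℕ} (α : Fin n → Fin r → ℝ) (ε : Fin r → ℝ)
    (lam : Frac r →ₗ[ℝ] ℝ) : Prop :=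
  (∀ x ∈ NGspace α, lam x = 0) ∧
  (∀ m : Fin n → ℕ, Generating α {i | 0 < m i} → (∑ i, m i) ≠ r →
    lam (fracOf α 1 m) = 0) ∧
  (∀ σ : Finset (Fin n), IsConeBasis α σ →
    (InCone α σ ε → lam (Phi α σ) = 1 / Real.sqrt (gram α σ)) ∧
    (¬ InCone α σ ε → lam (Phi α σ) = 0))

/-- The ideal `I_{𝔄,ε}` generated by the products `∏_{j∈J} αⱼ` over all `J` such that
`ε ∉ Cone(αᵢ : i ∉ J)`. -/
def JKIdeal {r n : ℕ} (α : Fin n → Fin r → ℝ) (ε : Fin r → ℝ) :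
    Ideal (MvPolynomial (Fin r) ℝ) :=
  Ideal.span {g | ∃ J : Finset (Fin n), ¬ InCone α Jᶜ ε ∧ g = ∏ j ∈ J, linPoly (α j)}

/-- `H` is a hyperplane of `ℝʳ` spanned by a subset of the list `α`. -/
def IsHyperplaneOf {r n : ℕ} (α : Fin n → Fin r → ℝ) (H : Submodule ℝ (Fin r → ℝ)) : Prop :=
  (∃ s : Set (Fin n), H = Submodule.span ℝ (α '' s)) ∧ Module.finrank ℝ H = r - 1

/-- `Cone(𝔄)` minus the union of the hyperplanes spanned by subsets of `𝔄`. -/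
def chamberComplement {r n : ℕ} (α : Fin n → Fin r → ℝ) : Set (Fin r → ℝ) :=
  coneSet α Finset.univ \ ⋃ H ∈ {H | IsHyperplaneOf α H}, (H : Set (Fin r → ℝ))

/-- A chamber of `𝔄`: a connected component of `Cone(𝔄) ∖ ⋃_{H ∈ ℋ(𝔄)} H`. -/
def IsChamber {r n : ℕ} (α : Fin n → Fin r → ℝ) (c : Set (Fin r → ℝ)) : Prop :=
  ∃ x ∈ chamberComplement α, c = connectedComponentIn (chamberComplement α) x

/-!
If `c ⊄ Cone(σ)`, some coordinate `g` of the basis `(αⱼ)_{j∈σ}` takes a negative value on `c`.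
Its kernel is a hyperplane of `𝔄`, which the connected set `c` avoids, so `g < 0` on `c` and
`g ≤ 0` on its closure. If moreover `w ⊆ Cone(σ)` then `g ≥ 0` on `w`, so `w` and hence
`W = span w` lie in `ker g`; comparing dimensions, `W = ker g`. Then `f` is the nonnegative
multiple `f(αⱼ) • g` of `g`, contradicting `f > 0` on `c`. The converse holds because the cone
is closed.
-/

theorem LinearMap.apply_eq_mul_of_ker_le {K V : Type*} [Field K] [AddCommGroup V] [Module K V]
    {f g : V →ₗ[K] K} (h : LinearMap.ker g ≤ LinearMap.ker f) {a : V} (ha : g a = 1) (v : V) :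
    f v = f a * g v := by
  have hv : v - g v • a ∈ LinearMap.ker f :=
    h (by rw [LinearMap.mem_ker, map_sub, map_smul, ha, smul_eq_mul, mul_one, sub_self])
  rw [LinearMap.mem_ker, map_sub, map_smul, smul_eq_mul, sub_eq_zero] at hv
  rw [hv, mul_comm]

theorem IsPreconnected.forall_neg_of_neg {X : Type*} [TopologicalSpace X] {s : Set X}
    (hs : IsPreconnected s) {g : X → ℝ} (hg : ContinuousOn g s) (hne : ∀ y ∈ s, g y ≠ 0)
    {x : X} (hx : x ∈ s) (hgx : g x < 0) : ∀ y ∈ s, g y < 0 := by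
  intro y hy
  by_contra! hgy
  obtain ⟨z, hz, hgz⟩ := hs.intermediate_value hx hy hg ⟨hgx.le, hgy⟩
  exact hne z hz hgz

namespace IsConeBasis

variable {r n : ℕ} {α : Fin n → Fin r → ℝ} {σ : Finset (Fin n)}

def basis (hσ : IsConeBasis α σ) : Module.Basis σ ℝ (Fin r → ℝ) :=
  Module.Basis.mk hσ.1 (by convert hσ.2.ge using 2; exact (Set.image_eq_range _ _).symm)

@[simp]
theorem basis_apply (hσ : IsConeBasis α σ) (j : σ) : hσ.basis j = α j :=
  Module.Basis.mk_apply _ _ j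

theorem coe_basis (hσ : IsConeBasis α σ) : ⇑hσ.basis = fun j : σ => α j :=
  funext hσ.basis_apply

theorem coord_apply_self (hσ : IsConeBasis α σ) (j : σ) : hσ.basis.coord j (α j) = 1 := by
  rw [← hσ.basis_apply, Module.Basis.coord_apply, Module.Basis.repr_self, Finsupp.single_eq_same]

theorem sum_smul_eq_sum_smul_basis (hσ : IsConeBasis α σ) (c : Fin n → ℝ) :
    ∑ i ∈ σ, c i • α i = ∑ j : σ, c j • hσ.basis j := by
  simp only [basis_apply]
  exact (Finset.sum_coe_sort σ fun i => c i • α i).symm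

theorem mem_coneSet_iff (hσ : IsConeBasis α σ) {v : Fin r → ℝ} :
    v ∈ coneSet α σ ↔ ∀ j, 0 ≤ hσ.basis.coord j v := by
  constructor
  · rintro ⟨c, hc, rfl⟩ j
    rw [hσ.sum_smul_eq_sum_smul_basis, Module.Basis.coord_apply, Module.Basis.repr_sum_self]
    exact hc j j.2
  · intro hv
    let c : Fin n → ℝ := fun i => if h : i ∈ σ then hσ.basis.coord ⟨i, h⟩ v else 0
    refine ⟨c, fun i hi => by simpa only [c, dif_pos hi] using hv ⟨i, hi⟩, ?_⟩
    rw [hσ.sum_smul_eq_sum_smul_basis]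
    conv_lhs => rw [← hσ.basis.sum_repr v]
    exact Finset.sum_congr rfl fun j _ => by simp only [c, dif_pos j.2, Module.Basis.coord_apply]

theorem isClosed_coneSet (hσ : IsConeBasis α σ) : IsClosed (coneSet α σ) := by
  have : coneSet α σ = {v | ∀ j, 0 ≤ hσ.basis.coord j v} := Set.ext fun _ => hσ.mem_coneSet_iff
  rw [this, Set.ofPred_forall]
  exact isClosed_iInter fun j =>
    isClosed_le continuous_const (hσ.basis.coord j).continuous_of_finiteDimensional

theorem isHyperplaneOf_ker_coord (hσ : IsConeBasis α σ) (j : σ) :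
    IsHyperplaneOf α (LinearMap.ker (hσ.basis.coord j)) := by
  refine ⟨⟨Subtype.val '' {j}ᶜ, ?_⟩, ?_⟩
  · ext v
    rw [Set.image_image, ← hσ.coe_basis, Module.Basis.mem_span_image, LinearMap.mem_ker,
      Module.Basis.coord_apply, Set.subset_compl_singleton_iff, Finset.mem_coe,
      Finsupp.notMem_support_iff]
  · have hcoord : hσ.basis.coord j ≠ 0 := fun h => by
      simpa [h] using hσ.coord_apply_self j
    have := Module.Dual.finrank_ker_add_one_of_ne_zero hcoord
    rw [Module.finrank_fin_fun] at this
    omega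

end IsConeBasis

namespace IsChamber

variable {r n : ℕ} {α : Fin n → Fin r → ℝ} {c : Set (Fin r → ℝ)}

theorem apply_ne_zero (hc : IsChamber α c) {g : (Fin r → ℝ) →ₗ[ℝ] ℝ}
    (hg : IsHyperplaneOf α (LinearMap.ker g)) {y : Fin r → ℝ} (hy : y ∈ c) : g y ≠ 0 := by
  obtain ⟨x, -, rfl⟩ := hc
  exact fun hgy => (connectedComponentIn_subset _ _ hy).2 <|
    Set.mem_biUnion (x := LinearMap.ker g) hg hgy

theorem nonpos_on_closure_of_neg (hc : IsChamber α c) {g : (Fin r → ℝ) →ₗ[ℝ] ℝ}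
    (hg : IsHyperplaneOf α (LinearMap.ker g)) {x : Fin r → ℝ} (hx : x ∈ c) (hgx : g x < 0) :
    ∀ z ∈ closure c, g z ≤ 0 := by
  have hcont := g.continuous_of_finiteDimensional
  have hconn : IsPreconnected c := by
    obtain ⟨x, -, rfl⟩ := hc
    exact isPreconnected_connectedComponentIn
  have hneg := hconn.forall_neg_of_neg hcont.continuousOn (fun y hy => hc.apply_ne_zero hg hy)
    hx hgx
  exact fun z hz => closure_minimal (fun y hy => (hneg y hy).le)
    (isClosed_le hcont continuous_const) hz

end IsChamber

theorem wall_subset_cone_iff_chamber_subset_general {r n : ℕ} (α : Fin n → Fin r → ℝ)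
    (c : Set (Fin r → ℝ)) (hc : IsChamber α c)
    (W : Submodule ℝ (Fin r → ℝ)) (hW : IsHyperplaneOf α W)
    (f : (Fin r → ℝ) →ₗ[ℝ] ℝ) (hWf : W = LinearMap.ker f)
    (hfc : ∀ x ∈ c, 0 < f x)
    (hwspan : Submodule.span ℝ (closure c ∩ (W : Set (Fin r → ℝ))) = W)
    (σ : Finset (Fin n)) (hσ : IsConeBasis α σ) (hσf : ∀ j ∈ σ, 0 ≤ f (α j)) :
    closure c ∩ (W : Set (Fin r → ℝ)) ⊆ coneSet α σ ↔ c ⊆ coneSet α σ := by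
  refine ⟨fun hw x hx => ?_, fun hcσ =>
    Set.inter_subset_left.trans (closure_minimal hcσ hσ.isClosed_coneSet)⟩
  rw [hσ.mem_coneSet_iff]
  intro j
  by_contra! hneg
  set g := hσ.basis.coord j
  have hg := hσ.isHyperplaneOf_ker_coord j
  have hg_closure := hc.nonpos_on_closure_of_neg hg hx hneg
  have hWg : W = LinearMap.ker g := by
    refine Submodule.eq_of_le_of_finrank_eq ?_ (hW.2.trans hg.2.symm)
    rw [← hwspan, Submodule.span_le]
    exact fun z hz => le_antisymm (hg_closure z hz.1) (hσ.mem_coneSet_iff.1 (hw hz) j)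
  have hfx := LinearMap.apply_eq_mul_of_ker_le (hWg ▸ hWf.le) (hσ.coord_apply_self j) x
  exact (hfc x hx).not_ge (hfx ▸ mul_nonpos_of_nonneg_of_nonpos (hσf j j.2) hneg.le)

/-- Let `c` be a chamber of a polarized spanning list `𝔄`, let `W = ker f ∈ ℋ(𝔄)` with
`f > 0` on `c`, and suppose `w = closure c ∩ W` spans `W`. If `(αⱼ)_{j∈σ}` is a basis from
`𝔄` with `f(αⱼ) ≥ 0` for all `j ∈ σ`, then `w ⊆ Cone(αⱼ : j ∈ σ)` iff
`c ⊆ Cone(αⱼ : j ∈ σ)`. -/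
theorem wall_subset_cone_iff_chamber_subset {r n : ℕ} (α : Fin n → Fin r → ℝ)
    (hα : ∀ i, α i ≠ 0) (hpol : Polarized α)
    (hspan : Submodule.span ℝ (Set.range α) = ⊤)
    (c : Set (Fin r → ℝ)) (hc : IsChamber α c)
    (W : Submodule ℝ (Fin r → ℝ)) (hW : IsHyperplaneOf α W)
    (f : (Fin r → ℝ) →ₗ[ℝ] ℝ) (hf : f ≠ 0) (hWf : W = LinearMap.ker f)
    (hfc : ∀ x ∈ c, 0 < f x)
    (hwspan : Submodule.span ℝ (closure c ∩ (W : Set (Fin r → ℝ))) = W)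
    (σ : Finset (Fin n)) (hσ : IsConeBasis α σ) (hσf : ∀ j ∈ σ, 0 ≤ f (α j)) :
    closure c ∩ (W : Set (Fin r → ℝ)) ⊆ coneSet α σ ↔ c ⊆ coneSet α σ :=
  wall_subset_cone_iff_chamber_subset_general α c hc W hW f hWf hfc hwspan σ hσ hσf
end
end

section
/- Vanishing outside the cone. Let 𝔄 = [α₁,…,αₙ] be a polarized list of nonzero vectors in ℝʳ, let ε ∈ ℝʳ be regular with respect to 𝔄, and let λ be a Jeffrey–Kirwan functional for (𝔄, ε). If S ⊆ {1,…,n} satisfies ε ∉ Cone(αᵢ : i ∈ S), then λ(Q/∏_{i∈S} αᵢ) = 0 for every polynomial Q ∈ ℝ[x₁,…,x_r]. -/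
open MvPolynomial

noncomputable section

/-!
Induct on the total multiplicity `∑ mᵢ` of a fraction `Q / ∏ αᵢ^{mᵢ}` whose support lies in `S`.
A non-generating support is killed by (i). If the support is generating, each variable `x_k` is a
linear combination of the `αᵢ` in the support, and such an `αᵢ` cancels one factor of the
denominator, so `Q x_k / ∏ αᵢ^{mᵢ}` is a combination of fractions of smaller multiplicity; this
reduces everything to constant numerators. Then either the degree differs from `r` and (ii)
applies, or the `r` spanning vectors of the support form a basis `σ ⊆ S`, the fraction is `Φ_σ`,
and `ε ∉ Cone(σ) ⊆ Cone(S)`, so (iii) gives `0`.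
-/

open Finset

variable {r n : ℕ}

lemma card_filter_pos_le_sum {ι : Type*} [Fintype ι] (m : ι → ℕ) :
    #{i | 0 < m i} ≤ ∑ i, m i := by
  rw [card_filter]
  exact sum_le_sum fun i _ => by split_ifs <;> omega

lemma eq_ite_pos_of_sum_le_card {ι : Type*} [Fintype ι] {m : ι → ℕ}
    (h : ∑ i, m i ≤ #{i | 0 < m i}) (i : ι) : m i = if 0 < m i then 1 else 0 := by
  have hle : ∀ j ∈ univ, (if 0 < m j then 1 else 0) ≤ m j := fun j _ => by
    split_ifs <;> omega
  rw [card_filter] at h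
  exact ((sum_eq_sum_iff_of_le hle).mp (h.antisymm' (sum_le_sum hle))
    i (mem_univ i)).symm

lemma exists_eq_add_single_one {ι : Type*} [DecidableEq ι] {m : ι → ℕ} {i : ι} (hi : 0 < m i) :
    ∃ m' : ι → ℕ, m = m' + Pi.single i 1 := by
  refine ⟨Function.update m i (m i - 1), funext fun j => ?_⟩
  rcases eq_or_ne j i with rfl | hj
  · simp; omega
  · simp [hj]

def linPolyₗ : (Fin r → ℝ) →ₗ[ℝ] MvPolynomial (Fin r) ℝ where
  toFun := linPoly
  map_add' v w := by simp [linPoly, add_mul, sum_add_distrib]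
  map_smul' a v := by simp [linPoly, smul_eq_C_mul, mul_sum, mul_assoc]

lemma linPoly_coeff_single (v : Fin r → ℝ) (k : Fin r) :
    (linPoly v).coeff (Finsupp.single k 1) = v k := by
  simp [linPoly, coeff_sum, coeff_C_mul, coeff_X, Finsupp.single_left_inj one_ne_zero]

lemma linPoly_ne_zero {v : Fin r → ℝ} (hv : v ≠ 0) : linPoly v ≠ 0 := by
  obtain ⟨k, hk⟩ := Function.ne_iff.mp hv
  intro h
  simp [← linPoly_coeff_single v k, h] at hk

lemma linPoly_single (k : Fin r) : linPoly (Pi.single k (1 : ℝ)) = X k := by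
  simp [linPoly, Pi.single_apply, apply_ite C, ite_mul]

lemma X_mem_span_linPoly {α : Fin n → Fin r → ℝ} {T : Set (Fin n)}
    (hT : Submodule.span ℝ (α '' T) = ⊤) (k : Fin r) :
    X k ∈ Submodule.span ℝ ((fun i => linPoly (α i)) '' T) := by
  rw [← linPoly_single, ← Set.image_image linPoly α T]
  change linPolyₗ _ ∈ Submodule.span ℝ (linPolyₗ '' _)
  rw [Submodule.span_image, hT]
  exact Submodule.mem_map_of_mem Submodule.mem_top

lemma emb_ne_zero {P : MvPolynomial (Fin r) ℝ} (hP : P ≠ 0) : emb P ≠ 0 :=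
  (IsFractionRing.to_map_ne_zero_of_mem_nonZeroDivisors (mem_nonZeroDivisors_of_ne_zero hP))

variable (α : Fin n → Fin r → ℝ)

@[simps]
def fracOfₗ (m : Fin n → ℕ) : MvPolynomial (Fin r) ℝ →ₗ[ℝ] Frac r where
  toFun P := fracOf α P m
  map_add' P Q := by simp [fracOf, emb, add_div]
  map_smul' a P := by
    simp only [fracOf, emb, RingHom.id_apply, ← smul_div_assoc]
    rw [Algebra.smul_def, map_mul, ← IsScalarTower.algebraMap_apply, ← Algebra.smul_def]

lemma fracOf_eq_div_prod (P : MvPolynomial (Fin r) ℝ) {m : Fin n → ℕ} {T : Finset (Fin n)}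
    (hm : ∀ i, m i = if i ∈ T then 1 else 0) :
    fracOf α P m = emb P / ∏ i ∈ T, emb (linPoly (α i)) := by
  simp only [fracOf, hm, pow_ite, pow_one, pow_zero, prod_ite_mem, univ_inter]

variable {α}

lemma fracOf_mul_linPoly {i : Fin n} (hi : α i ≠ 0) (P : MvPolynomial (Fin r) ℝ)
    (m : Fin n → ℕ) :
    fracOf α (P * linPoly (α i)) (m + Pi.single i 1) = fracOf α P m := by
  have hprod : ∏ j, emb (linPoly (α j)) ^ (m + Pi.single i 1 : Fin n → ℕ) j
      = (∏ j, emb (linPoly (α j)) ^ m j) * emb (linPoly (α i)) := by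
    simp only [Pi.add_apply, pow_add, prod_mul_distrib, Pi.single_apply, pow_ite, pow_one,
      pow_zero, prod_ite_eq', mem_univ, if_true]
  rw [fracOf, fracOf, hprod, show emb (P * linPoly (α i)) = emb P * emb (linPoly (α i)) from
    map_mul _ _ _, mul_div_mul_right _ _ (emb_ne_zero (linPoly_ne_zero hi))]

lemma InCone.mono {σ S : Finset (Fin n)} {ε : Fin r → ℝ} (h : σ ⊆ S) (hε : InCone α σ ε) :
    InCone α S ε := by
  obtain ⟨c, hc, rfl⟩ := hε
  refine ⟨fun i => if i ∈ σ then c i else 0, fun i _ => ?_, ?_⟩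
  · dsimp only
    split_ifs with hi
    exacts [hc i hi, le_rfl]
  · rw [← sum_subset h fun i _ hi => by simp [hi]]
    exact sum_congr rfl fun i hi => by simp [hi]

lemma le_card_of_span_eq_top {σ : Finset (Fin n)} (hσ : Submodule.span ℝ (α '' σ) = ⊤) :
    r ≤ σ.card := by
  calc r = Module.finrank ℝ (Fin r → ℝ) := (Module.finrank_fin_fun ℝ).symm
    _ ≤ Fintype.card σ := finrank_le_of_span_eq_top (Set.image_eq_range α σ ▸ hσ)
    _ = σ.card := Fintype.card_coe σ

lemma isConeBasis_of_card_le {σ : Finset (Fin n)} (hσ : Submodule.span ℝ (α '' σ) = ⊤)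
    (hcard : σ.card ≤ r) : IsConeBasis α σ := by
  refine ⟨linearIndependent_of_top_le_span_of_card_eq_finrank ?_ ?_, hσ⟩
  · exact (Set.image_eq_range α σ ▸ hσ).ge
  · simpa using hcard.antisymm (le_card_of_span_eq_top hσ)

variable {ε : Fin r → ℝ} {lam : Frac r →ₗ[ℝ] ℝ} {S : Finset (Fin n)}

namespace IsJKFunctional

variable (hlam : IsJKFunctional α ε lam) (hS : ¬ InCone α S ε)
include hlam hS

lemma map_fracOf_one_eq_zero {m : Fin n → ℕ} (hmS : ∀ i, 0 < m i → i ∈ S)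
    (hgen : Generating α {i | 0 < m i}) : lam (fracOf α 1 m) = 0 := by
  by_cases hsum : ∑ i, m i = r
  · set T : Finset (Fin n) := {i | 0 < m i}
    have hT : Submodule.span ℝ (α '' T) = ⊤ := by
      rw [show (T : Set (Fin n)) = {i | 0 < m i} by simp [T]]
      exact hgen
    have hm : ∀ i, m i = if i ∈ T then 1 else 0 := by
      simpa [T] using eq_ite_pos_of_sum_le_card (hsum.trans_le (le_card_of_span_eq_top hT))
    have hbasis : IsConeBasis α T :=
      isConeBasis_of_card_le hT (hsum ▸ card_filter_pos_le_sum m)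
    have hTS : T ⊆ S := fun i hi => hmS i (by simpa [T] using hi)
    rw [fracOf_eq_div_prod α 1 hm, emb, map_one, one_div]
    exact (hlam.2.2 T hbasis).2 fun hT => hS (hT.mono hTS)
  · exact hlam.2.1 m hgen hsum

lemma map_fracOf_eq_zero (hα : ∀ i, α i ≠ 0) (m : Fin n → ℕ) (hmS : ∀ i, 0 < m i → i ∈ S)
    (Q : MvPolynomial (Fin r) ℝ) : lam (fracOf α Q m) = 0 := by
  induction hN : ∑ i, m i using Nat.strong_induction_on generalizing m Q with
  | _ N IH =>
  by_cases hgen : Generating α {i | 0 < m i}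
  swap
  · exact hlam.1 _ (Submodule.subset_span ⟨Q, m, hgen, rfl⟩)
  induction Q using MvPolynomial.induction_on with
  | C a =>
    rw [C_eq_smul_one, ← fracOfₗ_apply, map_smul, map_smul, fracOfₗ_apply,
      hlam.map_fracOf_one_eq_zero hS hmS hgen, smul_zero]
  | add p q hp hq =>
    rw [← fracOfₗ_apply, map_add, map_add, fracOfₗ_apply, fracOfₗ_apply, hp, hq, add_zero]
  | mul_X p k _ =>
    have hker : Submodule.span ℝ ((fun i => linPoly (α i)) '' {i | 0 < m i}) ≤
        LinearMap.ker (lam ∘ₗ fracOfₗ α m ∘ₗ LinearMap.mulLeft ℝ p) := by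
      rw [Submodule.span_le]
      rintro _ ⟨i, hi, rfl⟩
      obtain ⟨m', rfl⟩ := exists_eq_add_single_one hi
      have hlt : ∑ j, m' j < N := by
        simp [← hN, sum_add_distrib]
      simpa [fracOf_mul_linPoly (hα i)] using
        IH _ hlt m' (fun j hj => hmS j (by simp; omega)) p rfl
    simpa using hker (X_mem_span_linPoly hgen k)

end IsJKFunctional

theorem jk_vanishes_outside_cone_general {r n : ℕ} (α : Fin n → Fin r → ℝ)
    (hα : ∀ i, α i ≠ 0)
    (ε : Fin r → ℝ)
    (lam : Frac r →ₗ[ℝ] ℝ) (hlam : IsJKFunctional α ε lam)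
    (S : Finset (Fin n)) (hS : ¬ InCone α S ε)
    (Q : MvPolynomial (Fin r) ℝ) :
    lam (emb Q / ∏ i ∈ S, emb (linPoly (α i))) = 0 := by
  rw [← fracOf_eq_div_prod α Q (m := fun i => if i ∈ S then 1 else 0) fun _ => rfl]
  exact hlam.map_fracOf_eq_zero hS hα _ (fun i hi => by by_contra h; simp [h] at hi) Q

/-- **Vanishing outside the cone.** If `ε ∉ Cone(αᵢ : i ∈ S)`, then
`λ(Q/∏_{i∈S} αᵢ) = 0` for every polynomial `Q`. -/
theorem jk_vanishes_outside_cone {r n : ℕ} (α : Fin n → Fin r → ℝ)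
    (hα : ∀ i, α i ≠ 0) (hpol : Polarized α)
    (ε : Fin r → ℝ) (hreg : RegularWrt α ε)
    (lam : Frac r →ₗ[ℝ] ℝ) (hlam : IsJKFunctional α ε lam)
    (S : Finset (Fin n)) (hS : ¬ InCone α S ε)
    (Q : MvPolynomial (Fin r) ℝ) :
    lam (emb Q / ∏ i ∈ S, emb (linPoly (α i))) = 0 :=
  jk_vanishes_outside_cone_general α hα ε lam hlam S hS Q
end
end
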